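/- Let p ∈ [1,∞) with p ≠ 2, let (X, μ) be a measure space, and let T : L^p(μ) → L^p(μ) be a linear isometry. If ξ, η ∈ L^p(μ) satisfy ξ·η = 0 almost everywhere, then T(ξ)·T(η) = 0 almost everywhere. -/

import Mathlib

/-!
For `q ≠ 2` the pointwise defect `‖z + w‖^q + ‖z - w‖^q - 2 (‖z‖^q + ‖w‖^q)` in an inner product
space has a constant sign (Jensen for `t ↦ t^(q/2)` on `‖z ± w‖²` together with the parallelogram
law, then sub- or superadditivity of `t ↦ t^(q/2)`), and it vanishes exactly when `z = 0` or
`w = 0`. For `f, g ∈ Lᵖ` and `q = p` its integral is the same expression in `‖f ± g‖, ‖f‖, ‖g‖`,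
so a linear isometry preserves it. If `f g = 0` a.e. this integral is `0`, so the defect of
`T f, T g` is an integrand of constant sign with zero integral, hence zero a.e.
-/

open MeasureTheory
open scoped ENNReal

namespace Real

variable {a b s : ℝ}

theorem sq_rpow_div_two (ha : 0 ≤ a) (s : ℝ) : (a ^ 2) ^ (s / 2) = a ^ s := by
  rw [← rpow_natCast, ← rpow_mul ha]
  congr 1
  ring

theorem rpow_add_lt_add_rpow (ha : 0 < a) (hb : 0 < b) (hs : s < 1) :
    (a + b) ^ s < a ^ s + b ^ s := by
  have hab : 0 < a + b := by linarith
  have above_chord {c : ℝ} (hc : 0 < c) (hc' : c < a + b) :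
      (a + b) ^ s * (c / (a + b)) < c ^ s := by
    have : c / (a + b) < (c / (a + b)) ^ s := by
      simpa using rpow_lt_rpow_of_exponent_gt (by positivity) ((div_lt_one hab).2 hc') hs
    calc (a + b) ^ s * (c / (a + b)) < (a + b) ^ s * (c / (a + b)) ^ s := by gcongr
      _ = c ^ s := by rw [div_rpow hc.le hab.le, mul_div_cancel₀ _ (by positivity)]
  calc (a + b) ^ s = (a + b) ^ s * (a / (a + b)) + (a + b) ^ s * (b / (a + b)) := by
        field_simp
    _ < a ^ s + b ^ s := add_lt_add (above_chord ha (by linarith)) (above_chord hb (by linarith))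

theorem add_rpow_lt_rpow_add (ha : 0 < a) (hb : 0 < b) (hs : 1 < s) :
    a ^ s + b ^ s < (a + b) ^ s := by
  have hab : 0 < a + b := by linarith
  have below_chord {c : ℝ} (hc : 0 < c) (hc' : c < a + b) :
      c ^ s < (a + b) ^ s * (c / (a + b)) := by
    have : (c / (a + b)) ^ s < c / (a + b) := by
      simpa using rpow_lt_rpow_of_exponent_gt (by positivity) ((div_lt_one hab).2 hc') hs
    calc c ^ s = (a + b) ^ s * (c / (a + b)) ^ s := by
          rw [div_rpow hc.le hab.le, mul_div_cancel₀ _ (by positivity)]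
      _ < (a + b) ^ s * (c / (a + b)) := by gcongr
  calc a ^ s + b ^ s < (a + b) ^ s * (a / (a + b)) + (a + b) ^ s * (b / (a + b)) :=
        add_lt_add (below_chord ha (by linarith)) (below_chord hb (by linarith))
    _ = (a + b) ^ s := by field_simp

end Real

section Parallelogram

variable {E : Type*} [NormedAddCommGroup E] {q : ℝ}

noncomputable def parallelogramDefect (q : ℝ) (z w : E) : ℝ :=
  ‖z + w‖ ^ q + ‖z - w‖ ^ q - 2 * (‖z‖ ^ q + ‖w‖ ^ q)

theorem parallelogramDefect_of_eq_zero_or (hq : 0 < q) {z w : E} (h : z = 0 ∨ w = 0) :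
    parallelogramDefect q z w = 0 := by
  rcases h with rfl | rfl <;> simp [parallelogramDefect, Real.zero_rpow hq.ne'] <;> ring

theorem parallelogramDefect_le (𝕜 : Type*) [RCLike 𝕜] [InnerProductSpace 𝕜 E] (hq0 : 0 < q)
    (hq2 : q ≤ 2) (z w : E) :
    parallelogramDefect q z w ≤ 2 * ((‖z‖ ^ 2 + ‖w‖ ^ 2) ^ (q / 2) - (‖z‖ ^ q + ‖w‖ ^ q)) := by
  have jensen := (Real.concaveOn_rpow (p := q / 2) (by positivity) (by linarith)).2
    (sq_nonneg ‖z + w‖) (sq_nonneg ‖z - w‖) (by norm_num : (0 : ℝ) ≤ 1 / 2)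
    (by norm_num : (0 : ℝ) ≤ 1 / 2) (by norm_num)
  have midpoint : 1 / 2 * ‖z + w‖ ^ 2 + 1 / 2 * ‖z - w‖ ^ 2 = ‖z‖ ^ 2 + ‖w‖ ^ 2 := by
    linarith [parallelogram_law_with_norm 𝕜 z w]
  simp only [smul_eq_mul, midpoint, Real.sq_rpow_div_two (norm_nonneg _)] at jensen
  unfold parallelogramDefect
  linarith

theorem le_parallelogramDefect (𝕜 : Type*) [RCLike 𝕜] [InnerProductSpace 𝕜 E] (hq2 : 2 ≤ q)
    (z w : E) :
    2 * ((‖z‖ ^ 2 + ‖w‖ ^ 2) ^ (q / 2) - (‖z‖ ^ q + ‖w‖ ^ q)) ≤ parallelogramDefect q z w := by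
  have jensen := (convexOn_rpow (p := q / 2) (by linarith)).2
    (sq_nonneg ‖z + w‖) (sq_nonneg ‖z - w‖) (by norm_num : (0 : ℝ) ≤ 1 / 2)
    (by norm_num : (0 : ℝ) ≤ 1 / 2) (by norm_num)
  have midpoint : 1 / 2 * ‖z + w‖ ^ 2 + 1 / 2 * ‖z - w‖ ^ 2 = ‖z‖ ^ 2 + ‖w‖ ^ 2 := by
    linarith [parallelogram_law_with_norm 𝕜 z w]
  simp only [smul_eq_mul, midpoint, Real.sq_rpow_div_two (norm_nonneg _)] at jensen
  unfold parallelogramDefect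
  linarith

theorem parallelogramDefect_nonpos (𝕜 : Type*) [RCLike 𝕜] [InnerProductSpace 𝕜 E] (hq0 : 0 < q)
    (hq2 : q ≤ 2) (z w : E) : parallelogramDefect q z w ≤ 0 := by
  have := Real.rpow_add_le_add_rpow (sq_nonneg ‖z‖) (sq_nonneg ‖w‖) (p := q / 2) (by positivity)
    (by linarith)
  rw [Real.sq_rpow_div_two (norm_nonneg _), Real.sq_rpow_div_two (norm_nonneg _)] at this
  linarith [parallelogramDefect_le 𝕜 hq0 hq2 z w]

theorem parallelogramDefect_nonneg (𝕜 : Type*) [RCLike 𝕜] [InnerProductSpace 𝕜 E] (hq2 : 2 ≤ q)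
    (z w : E) : 0 ≤ parallelogramDefect q z w := by
  have := Real.add_rpow_le_rpow_add (sq_nonneg ‖z‖) (sq_nonneg ‖w‖) (p := q / 2) (by linarith)
  rw [Real.sq_rpow_div_two (norm_nonneg _), Real.sq_rpow_div_two (norm_nonneg _)] at this
  linarith [le_parallelogramDefect 𝕜 hq2 z w]

theorem parallelogramDefect_eq_zero_iff (𝕜 : Type*) [RCLike 𝕜] [InnerProductSpace 𝕜 E]
    (hq0 : 0 < q) (hq2 : q ≠ 2) {z w : E} : parallelogramDefect q z w = 0 ↔ z = 0 ∨ w = 0 := by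
  refine ⟨fun h ↦ ?_, parallelogramDefect_of_eq_zero_or hq0⟩
  by_contra! hzw
  have hz : 0 < ‖z‖ ^ 2 := pow_pos (norm_pos_iff.2 hzw.1) 2
  have hw : 0 < ‖w‖ ^ 2 := pow_pos (norm_pos_iff.2 hzw.2) 2
  rcases hq2.lt_or_gt with hlt | hgt
  · have := Real.rpow_add_lt_add_rpow hz hw (s := q / 2) (by linarith)
    rw [Real.sq_rpow_div_two (norm_nonneg _), Real.sq_rpow_div_two (norm_nonneg _)] at this
    linarith [parallelogramDefect_le 𝕜 hq0 hlt.le z w]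
  · have := Real.add_rpow_lt_rpow_add hz hw (s := q / 2) (by linarith)
    rw [Real.sq_rpow_div_two (norm_nonneg _), Real.sq_rpow_div_two (norm_nonneg _)] at this
    linarith [le_parallelogramDefect 𝕜 hgt.le z w]

end Parallelogram

theorem LinearIsometry.parallelogramDefect_map {𝕜 E F : Type*} [NormedAddCommGroup E]
    [NormedAddCommGroup F] [NormedField 𝕜] [NormedSpace 𝕜 E] [NormedSpace 𝕜 F] (T : E →ₗᵢ[𝕜] F)
    (q : ℝ) (z w : E) : parallelogramDefect q (T z) (T w) = parallelogramDefect q z w := by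
  simp only [parallelogramDefect, ← map_add, ← map_sub, T.norm_map]

theorem MeasureTheory.MemLp.integrable_parallelogramDefect {X E : Type*} [MeasurableSpace X]
    {μ : Measure X} [NormedAddCommGroup E] {p : ℝ≥0∞} (hp0 : p ≠ 0) (hp : p ≠ ∞) {f g : X → E}
    (hf : MemLp f p μ) (hg : MemLp g p μ) :
    Integrable (fun x ↦ parallelogramDefect p.toReal (f x) (g x)) μ :=
  ((hf.add hg).integrable_norm_rpow hp0 hp |>.add <| (hf.sub hg).integrable_norm_rpow hp0 hp).sub
    ((hf.integrable_norm_rpow hp0 hp |>.add <| hg.integrable_norm_rpow hp0 hp).const_mul 2)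

namespace MeasureTheory.Lp

variable {X E : Type*} [MeasurableSpace X] {μ : Measure X} [NormedAddCommGroup E] {p : ℝ≥0∞}

theorem norm_rpow_eq_integral (hp0 : p ≠ 0) (hp : p ≠ ∞) (f : Lp E p μ) :
    ‖f‖ ^ p.toReal = ∫ x, ‖f x‖ ^ p.toReal ∂μ := by
  rw [norm_def, toReal_eLpNorm (Lp.aestronglyMeasurable f),
    lpNorm_eq_integral_norm_rpow_toReal hp0 hp (Lp.aestronglyMeasurable f),
    Real.rpow_inv_rpow (integral_nonneg fun _ ↦ by positivity) (ENNReal.toReal_pos hp0 hp).ne']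

theorem parallelogramDefect_eq_integral [Fact (1 ≤ p)] (hp : p ≠ ∞) (f g : Lp E p μ) :
    parallelogramDefect p.toReal f g = ∫ x, parallelogramDefect p.toReal (f x) (g x) ∂μ := by
  have hp0 : p ≠ 0 := (zero_lt_one.trans_le Fact.out).ne'
  have norm_rpow {φ : Lp E p μ} {ψ : X → E} (h : φ =ᵐ[μ] ψ) :
      ‖φ‖ ^ p.toReal = ∫ x, ‖ψ x‖ ^ p.toReal ∂μ := by
    rw [norm_rpow_eq_integral hp0 hp]
    exact integral_congr_ae (h.mono fun x hx ↦ by simp only [hx])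
  have integrable {ψ : X → E} (h : MemLp ψ p μ) : Integrable (fun x ↦ ‖ψ x‖ ^ p.toReal) μ :=
    h.integrable_norm_rpow hp0 hp
  have hf := Lp.memLp f
  have hg := Lp.memLp g
  have hsum : Integrable (fun x ↦ ‖f x + g x‖ ^ p.toReal) μ := integrable (hf.add hg)
  have hdiff : Integrable (fun x ↦ ‖f x - g x‖ ^ p.toReal) μ := integrable (hf.sub hg)
  simp only [parallelogramDefect]
  rw [norm_rpow (ψ := fun x ↦ f x + g x) (coeFn_add f g),
    norm_rpow (ψ := fun x ↦ f x - g x) (coeFn_sub f g), norm_rpow (ψ := f) .rfl,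
    norm_rpow (ψ := g) .rfl, ← integral_add hsum hdiff,
    ← integral_add (integrable hf) (integrable hg), ← integral_const_mul]
  exact (integral_sub (hsum.add hdiff) (((integrable hf).add (integrable hg)).const_mul 2)).symm

theorem ae_parallelogramDefect_eq_zero (𝕜 : Type*) [RCLike 𝕜] [InnerProductSpace 𝕜 E]
    [Fact (1 ≤ p)] (hp : p ≠ ∞) {f g : Lp E p μ} (h : parallelogramDefect p.toReal f g = 0) :
    ∀ᵐ x ∂μ, parallelogramDefect p.toReal (f x) (g x) = 0 := by
  have hp0 : p ≠ 0 := (zero_lt_one.trans_le Fact.out).ne'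
  have hq0 : 0 < p.toReal := ENNReal.toReal_pos hp0 hp
  have hint : Integrable (fun x ↦ parallelogramDefect p.toReal (f x) (g x)) μ :=
    (Lp.memLp f).integrable_parallelogramDefect hp0 hp (Lp.memLp g)
  rw [parallelogramDefect_eq_integral hp] at h
  rcases le_total p.toReal 2 with hq2 | hq2
  · have nonneg x : 0 ≤ -parallelogramDefect p.toReal (f x) (g x) :=
      neg_nonneg.2 (parallelogramDefect_nonpos 𝕜 hq0 hq2 _ _)
    rw [← neg_eq_zero, ← integral_neg, integral_eq_zero_iff_of_nonneg nonneg hint.neg] at h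
    filter_upwards [h] with x hx using neg_eq_zero.1 hx
  · exact (integral_eq_zero_iff_of_nonneg (fun x ↦ parallelogramDefect_nonneg 𝕜 hq2 _ _) hint).1 h

end MeasureTheory.Lp

theorem LinearIsometry.ae_eq_zero_or_of_ae_eq_zero_or {𝕜 X Y E F : Type*} [RCLike 𝕜]
    [MeasurableSpace X] [MeasurableSpace Y] {μ : Measure X} {ν : Measure Y} [NormedAddCommGroup E]
    [NormedSpace 𝕜 E] [NormedAddCommGroup F] [InnerProductSpace 𝕜 F] {p : ℝ≥0∞} [Fact (1 ≤ p)]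
    (hp : p ≠ ∞) (hp2 : p ≠ 2) (T : Lp E p μ →ₗᵢ[𝕜] Lp F p ν) {f g : Lp E p μ}
    (h : ∀ᵐ x ∂μ, f x = 0 ∨ g x = 0) : ∀ᵐ y ∂ν, T f y = 0 ∨ T g y = 0 := by
  have hq0 : 0 < p.toReal := ENNReal.toReal_pos (zero_lt_one.trans_le Fact.out).ne' hp
  have hq2 : p.toReal ≠ 2 := by
    contrapose! hp2
    rw [← ENNReal.ofReal_toReal hp, hp2, ENNReal.ofReal_ofNat]
  have hfg : parallelogramDefect p.toReal f g = 0 := by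
    rw [Lp.parallelogramDefect_eq_integral hp]
    exact integral_eq_zero_of_ae (h.mono fun x hx ↦ parallelogramDefect_of_eq_zero_or hq0 hx)
  rw [← T.parallelogramDefect_map] at hfg
  filter_upwards [Lp.ae_parallelogramDefect_eq_zero 𝕜 hp hfg] with y hy
  exact (parallelogramDefect_eq_zero_iff 𝕜 hq0 hq2).1 hy

theorem stmt4_general {X : Type*} [MeasurableSpace X] (μ : Measure X) (p : ℝ)
    (hp2 : p ≠ 2) [Fact (1 ≤ ENNReal.ofReal p)]
    (T : Lp ℂ (ENNReal.ofReal p) μ →ₗᵢ[ℂ] Lp ℂ (ENNReal.ofReal p) μ)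
    (ξ η : Lp ℂ (ENNReal.ofReal p) μ)
    (h : ∀ᵐ x ∂μ, (ξ : X → ℂ) x * (η : X → ℂ) x = 0) :
    ∀ᵐ x ∂μ, (T ξ : X → ℂ) x * (T η : X → ℂ) x = 0 := by
  have hp2' : ENNReal.ofReal p ≠ 2 := by
    rwa [ne_eq, ENNReal.ofReal_eq_ofNat]
  filter_upwards [T.ae_eq_zero_or_of_ae_eq_zero_or ENNReal.ofReal_ne_top hp2'
    (h.mono fun x hx ↦ mul_eq_zero.1 hx)] with x hx using mul_eq_zero.2 hx

/-- For `p ∈ [1,∞)`, `p ≠ 2`, a linear isometry `T` of `L^p(μ)` is disjointness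
preserving: if `ξ·η = 0` a.e., then `T(ξ)·T(η) = 0` a.e. -/
theorem stmt4 {X : Type*} [MeasurableSpace X] (μ : Measure X) (p : ℝ)
    (hp1 : 1 ≤ p) (hp2 : p ≠ 2) [Fact (1 ≤ ENNReal.ofReal p)]
    (T : Lp ℂ (ENNReal.ofReal p) μ →ₗᵢ[ℂ] Lp ℂ (ENNReal.ofReal p) μ)
    (ξ η : Lp ℂ (ENNReal.ofReal p) μ)
    (h : ∀ᵐ x ∂μ, (ξ : X → ℂ) x * (η : X → ℂ) x = 0) :
    ∀ᵐ x ∂μ, (T ξ : X → ℂ) x * (T η : X → ℂ) x = 0 :=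
  stmt4_general μ p hp2 T ξ η h
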